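/- arXiv:math/9406207 — 3 statements merged into one kernel-verified Lean document; each statement's English description precedes it below -/
import Mathlib

section
/- The group with presentation ⟨a, b | a^6 = 1, b^6 = 1, a·b^2 = b·a^2⟩ is infinite. -/
/-- The relators of the presentation ⟨a, b | a^6 = 1, b^6 = 1, a·b^2 = b·a^2⟩. -/
def G2rels : Set (FreeGroup (Fin 2)) :=
  {(FreeGroup.of 0) ^ 6, (FreeGroup.of 1) ^ 6,
   FreeGroup.of 0 * (FreeGroup.of 1) ^ 2 * (FreeGroup.of 1 * (FreeGroup.of 0) ^ 2)⁻¹}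

/-- The group G(2) = ⟨a, b | a^6 = b^6 = 1, ab^2 = ba^2⟩. -/
abbrev G2 : Type := PresentedGroup G2rels

/-- Affine representation: a ↦ affine map (A, s), b ↦ (B, 0) as 4×4 integer matrices. -/
def ma : Matrix (Fin 4) (Fin 4) ℤ := !![-1,-1,-1,-2; 0,0,-1,0; 0,1,1,1; 0,0,0,1]
def mai : Matrix (Fin 4) (Fin 4) ℤ := !![-1,0,-1,-1; 0,1,1,-1; 0,-1,0,0; 0,0,0,1]
def mb : Matrix (Fin 4) (Fin 4) ℤ := !![0,0,-1,0; -1,-1,-1,0; 1,0,1,0; 0,0,0,1]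
def mbi : Matrix (Fin 4) (Fin 4) ℤ := !![1,0,1,0; 0,-1,-1,0; -1,0,0,0; 0,0,0,1]

def uA : (Matrix (Fin 4) (Fin 4) ℤ)ˣ := ⟨ma, mai, by decide, by decide⟩
def uB : (Matrix (Fin 4) (Fin 4) ℤ)ˣ := ⟨mb, mbi, by decide, by decide⟩

def fgen : Fin 2 → (Matrix (Fin 4) (Fin 4) ℤ)ˣ := ![uA, uB]

lemma frels : ∀ r ∈ G2rels, FreeGroup.lift fgen r = 1 := by
  intro r hr
  rcases hr with h | h | h <;> subst h <;>
    simp only [map_mul, map_pow, map_inv, FreeGroup.lift_apply_of]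
  · refine Units.ext ?_
    rw [Units.val_pow_eq_pow_val]
    show ma ^ 6 = 1
    decide
  · refine Units.ext ?_
    rw [Units.val_pow_eq_pow_val]
    show mb ^ 6 = 1
    decide
  · rw [mul_inv_eq_one]
    refine Units.ext ?_
    rw [Units.val_mul, Units.val_mul, Units.val_pow_eq_pow_val, Units.val_pow_eq_pow_val]
    show ma * mb ^ 2 = mb * ma ^ 2
    decide

def φ : G2 →* (Matrix (Fin 4) (Fin 4) ℤ)ˣ := PresentedGroup.toGroup frels

/-- The element (a b⁻¹)² of G2; its image is a nontrivial translation. -/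
def g : G2 := (PresentedGroup.of 0 * (PresentedGroup.of 1)⁻¹) ^ 2

def T : (Matrix (Fin 4) (Fin 4) ℤ)ˣ := (uA * uB⁻¹) ^ 2

lemma φg : φ g = T := by
  unfold g T φ
  simp [PresentedGroup.toGroup.of, fgen]

lemma T_pow (n : ℕ) : ((T ^ n : (Matrix (Fin 4) (Fin 4) ℤ)ˣ) : Matrix (Fin 4) (Fin 4) ℤ) 0 3
    = -2 * n ∧ ((T ^ n : (Matrix (Fin 4) (Fin 4) ℤ)ˣ) : Matrix (Fin 4) (Fin 4) ℤ) 3 3 = 1 := by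
  have h00 : (T : Matrix (Fin 4) (Fin 4) ℤ) 0 0 = 1 := by decide
  have h01 : (T : Matrix (Fin 4) (Fin 4) ℤ) 0 1 = 0 := by decide
  have h02 : (T : Matrix (Fin 4) (Fin 4) ℤ) 0 2 = 0 := by decide
  have h03 : (T : Matrix (Fin 4) (Fin 4) ℤ) 0 3 = -2 := by decide
  have h30 : (T : Matrix (Fin 4) (Fin 4) ℤ) 3 0 = 0 := by decide
  have h31 : (T : Matrix (Fin 4) (Fin 4) ℤ) 3 1 = 0 := by decide
  have h32 : (T : Matrix (Fin 4) (Fin 4) ℤ) 3 2 = 0 := by decide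
  have h33 : (T : Matrix (Fin 4) (Fin 4) ℤ) 3 3 = 1 := by decide
  induction n with
  | zero =>
    constructor
    · show (1 : Matrix (Fin 4) (Fin 4) ℤ) 0 3 = -2 * (0 : ℕ)
      decide
    · show (1 : Matrix (Fin 4) (Fin 4) ℤ) 3 3 = 1
      decide
  | succ n ih =>
    have h : (T ^ (n+1) : (Matrix (Fin 4) (Fin 4) ℤ)ˣ).val = T.val * (T ^ n).val := by
      rw [pow_succ']
      exact Units.val_mul _ _
    constructor
    · rw [h, Matrix.mul_apply, Fin.sum_univ_four, h00, h01, h02, h03, ih.1, ih.2]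
      push_cast
      ring
    · rw [h, Matrix.mul_apply, Fin.sum_univ_four, h30, h31, h32, h33, ih.2]
      ring
  
lemma g_pow_injective : Function.Injective (fun n : ℕ => g ^ n) := by
  intro m n h
  have h2 : φ (g ^ m) = φ (g ^ n) := congrArg φ h
  rw [map_pow, map_pow, φg] at h2
  have h3 : ((T ^ m).val : Matrix (Fin 4) (Fin 4) ℤ) 0 3
      = ((T ^ n).val : Matrix (Fin 4) (Fin 4) ℤ) 0 3 := by rw [h2]
  rw [(T_pow m).1, (T_pow n).1] at h3
  omega

/-- G(2) is infinite. -/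
theorem G2_infinite : Infinite G2 := by
  exact Infinite.of_injective _ g_pow_injective
end

section
/- Let G be the group with presentation ⟨a, b | a^6 = 1, b^6 = 1, a·b^2 = b·a^2⟩, and set x = aba^{-1}b^{-1} and y = ab^{-1}a^{-1}b in G. Then the following conjugation relations hold in G: a^{-1}xa = x^{-1}y^{-1}x, b^{-1}xb = y^{-1}, a^{-1}ya = x^{-1}y, and b^{-1}yb = y^{-1}x^{-1}y^2. -/
/-- The images of the two generators a, b in G(2). -/
def ga : G2 := PresentedGroup.of 0
def gb : G2 := PresentedGroup.of 1

theorem G2rel : ga * gb ^ 2 * (gb * ga ^ 2)⁻¹ = 1 := by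
  have hmem : FreeGroup.of (0 : Fin 2) * (FreeGroup.of 1) ^ 2 *
      (FreeGroup.of 1 * (FreeGroup.of 0) ^ 2)⁻¹ ∈ Subgroup.normalClosure G2rels :=
    Subgroup.subset_normalClosure (by right; right; rfl)
  have h : (PresentedGroup.mk G2rels (FreeGroup.of (0 : Fin 2) * (FreeGroup.of 1) ^ 2 *
      (FreeGroup.of 1 * (FreeGroup.of 0) ^ 2)⁻¹) : G2) = 1 :=
    (QuotientGroup.eq_one_iff _).mpr hmem
  simpa [ga, gb, PresentedGroup.of, map_mul, map_pow, map_inv] using h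

/-- Conjugation action of a and b on x = aba⁻¹b⁻¹ and y = ab⁻¹a⁻¹b in G(2). -/
theorem conjugation_relations_G2 :
    let x : G2 := ga * gb * ga⁻¹ * gb⁻¹
    let y : G2 := ga * gb⁻¹ * ga⁻¹ * gb
    ga⁻¹ * x * ga = x⁻¹ * y⁻¹ * x ∧
    gb⁻¹ * x * gb = y⁻¹ ∧
    ga⁻¹ * y * ga = x⁻¹ * y ∧
    gb⁻¹ * y * gb = y⁻¹ * x⁻¹ * y ^ 2 := by
  intro x y
  have rel : ga * (gb * gb) * (gb * (ga * ga))⁻¹ = 1 := by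
    have := G2rel; rw [← this]; group; try simp [pow_two, zpow_two, mul_assoc]
  refine ⟨?_, ?_, ?_, ?_⟩
  · show ga⁻¹ * (ga * gb * ga⁻¹ * gb⁻¹) * ga =
      (ga * gb * ga⁻¹ * gb⁻¹)⁻¹ * (ga * gb⁻¹ * ga⁻¹ * gb)⁻¹ * (ga * gb * ga⁻¹ * gb⁻¹)
    have e : (ga * gb * ga⁻¹ * gb⁻¹)⁻¹ * (ga * gb⁻¹ * ga⁻¹ * gb)⁻¹ * (ga * gb * ga⁻¹ * gb⁻¹) =
        (ga⁻¹ * (ga * gb * ga⁻¹ * gb⁻¹) * ga) *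
        (ga⁻¹ * (ga * (gb * gb) * (gb * (ga * ga))⁻¹)⁻¹ * ga * (gb * ga⁻¹ * gb⁻¹) *
          (ga * (gb * gb) * (gb * (ga * ga))⁻¹) * (gb * ga * gb⁻¹)) := by group
    rw [e, rel]; group; try simp [pow_two, zpow_two, mul_assoc]
  · show gb⁻¹ * (ga * gb * ga⁻¹ * gb⁻¹) * gb = (ga * gb⁻¹ * ga⁻¹ * gb)⁻¹
    group
  · show ga⁻¹ * (ga * gb⁻¹ * ga⁻¹ * gb) * ga =
      (ga * gb * ga⁻¹ * gb⁻¹)⁻¹ * (ga * gb⁻¹ * ga⁻¹ * gb)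
    have e : (ga * gb * ga⁻¹ * gb⁻¹)⁻¹ * (ga * gb⁻¹ * ga⁻¹ * gb) =
        (ga⁻¹ * (ga * gb⁻¹ * ga⁻¹ * gb) * ga) *
        (ga⁻¹ * gb⁻¹ * (ga * (gb * gb) * (gb * (ga * ga))⁻¹) * (gb * ga * gb⁻¹) *
          (ga * (gb * gb) * (gb * (ga * ga))⁻¹)⁻¹ * gb) := by group
    rw [e, rel]; group; try simp [pow_two, zpow_two, mul_assoc]
  · show gb⁻¹ * (ga * gb⁻¹ * ga⁻¹ * gb) * gb =
      (ga * gb⁻¹ * ga⁻¹ * gb)⁻¹ * (ga * gb * ga⁻¹ * gb⁻¹)⁻¹ * (ga * gb⁻¹ * ga⁻¹ * gb) ^ 2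
    rw [show (ga * gb⁻¹ * ga⁻¹ * gb : G2) ^ 2 =
      (ga * gb⁻¹ * ga⁻¹ * gb) * (ga * gb⁻¹ * ga⁻¹ * gb) from sq _]
    have e : (ga * gb⁻¹ * ga⁻¹ * gb)⁻¹ * (ga * gb * ga⁻¹ * gb⁻¹)⁻¹ *
        ((ga * gb⁻¹ * ga⁻¹ * gb) * (ga * gb⁻¹ * ga⁻¹ * gb)) =
        (gb⁻¹ * (ga * gb⁻¹ * ga⁻¹ * gb) * gb) *
        (gb⁻¹ * gb⁻¹ * (ga * (gb * gb) * (gb * (ga * ga))⁻¹) * (gb * ga * gb * ga⁻¹ * gb⁻¹) *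
          (ga * (gb * gb) * (gb * (ga * ga))⁻¹)⁻¹ * (gb * ga * gb⁻¹ * ga⁻¹ * gb)) := by
      group; try simp [pow_two, zpow_two, mul_assoc]
    rw [e, rel]; group; try simp [pow_two, zpow_two, mul_assoc]
end

section
/- Let G be the group with presentation ⟨a, b, c | a^6 = b^6 = c^6 = 1, ab^2 = ba^2, ac^2 = ca^2, bc^2 = cb^2⟩. Then the quotient G'/G'' of the first derived subgroup of G by the second derived subgroup of G is isomorphic to C_4^4, the direct product of four cyclic groups of order 4. -/
/-- The relators of ⟨a, b, c | a^6 = b^6 = c^6 = 1, ab^2 = ba^2, ac^2 = ca^2, bc^2 = cb^2⟩. -/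
def G3rels : Set (FreeGroup (Fin 3)) :=
  {(FreeGroup.of 0) ^ 6, (FreeGroup.of 1) ^ 6, (FreeGroup.of 2) ^ 6,
   FreeGroup.of 0 * (FreeGroup.of 1) ^ 2 * (FreeGroup.of 1 * (FreeGroup.of 0) ^ 2)⁻¹,
   FreeGroup.of 0 * (FreeGroup.of 2) ^ 2 * (FreeGroup.of 2 * (FreeGroup.of 0) ^ 2)⁻¹,
   FreeGroup.of 1 * (FreeGroup.of 2) ^ 2 * (FreeGroup.of 2 * (FreeGroup.of 1) ^ 2)⁻¹}

/-- The group G(3) = ⟨a, b, c | a^6 = b^6 = c^6 = 1, ab^2 = ba^2, ac^2 = ca^2, bc^2 = cb^2⟩. -/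
abbrev G3 : Type := PresentedGroup G3rels

/-!
Put `K = G ⧸ G''`, so that `G' ⧸ G'' ≅ K'` and `K'` is abelian. Write `a, b, c` for the
generators. The relation `a b² = b a²` says that conjugation by `a` sends `u = a⁻¹b` to
`x = ba⁻¹` and `x` to `x⁻¹u`. Hence `a` normalises the subgroup generated by `a⁻¹b, ba⁻¹, a⁻¹c,
ca⁻¹`; so do `b = a(a⁻¹b)` and `c = a(a⁻¹c)`, and the quotient by it is cyclic, generated by `a`.
So these four elements generate `K'`. Expanding `1 = b⁶ = (au)⁶` as a product of the six
conjugates `aᵏua⁻ᵏ` and using the recursion gives `x⁴ = 1` once `u` and `x` commute, so `K'` is a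
quotient of `C₄⁴`. Conversely `G` maps to the metabelian group `(ℤ/4)⁴ ⋊ ℤ/6` with the four
generators of `K'` going to a basis of `(ℤ/4)⁴`, so `K' ≅ C₄⁴`.
-/

open Subgroup

section DerivedSubgroup

variable {G : Type*} [Group G]

lemma Subgroup.commutator_eq_subgroupOf (H : Subgroup G) :
    _root_.commutator H = ⁅H, H⁆.subgroupOf H := by
  rw [← H.map_subtype_commutator, ← comap_subtype,
    comap_map_eq_self_of_injective H.subtype_injective]

noncomputable def Subgroup.abelianizationEquivMap (H : Subgroup G) [H.Normal] :
    Abelianization H ≃* H.map (QuotientGroup.mk' ⁅H, H⁆) :=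
  have hker : _root_.commutator H = ((QuotientGroup.mk' ⁅H, H⁆).comp H.subtype).ker := by
    rw [H.commutator_eq_subgroupOf, ← MonoidHom.comap_ker, QuotientGroup.ker_mk', comap_subtype]
  (QuotientGroup.quotientMulEquivOfEq hker).trans <|
    (QuotientGroup.quotientKerEquivRange _).trans <|
      MulEquiv.subgroupCongr (by rw [MonoidHom.range_comp, range_subtype])

variable (G) in
noncomputable def abelianizationCommutatorEquiv :
    Abelianization (commutator G) ≃* commutator (G ⧸ ⁅commutator G, commutator G⁆) :=
  (commutator G).abelianizationEquivMap.trans <| MulEquiv.subgroupCongr <| by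
    rw [map_commutator_eq, QuotientGroup.range_mk']
    rfl

instance : IsMulCommutative (commutator (G ⧸ ⁅commutator G, commutator G⁆)) :=
  ⟨⟨fun x y => (abelianizationCommutatorEquiv G).symm.injective <| by
    simp only [map_mul, mul_comm]⟩⟩

lemma commutator_commutator_le_ker {M : Type*} [Group M] [IsMulCommutative (commutator M)]
    (f : G →* M) : ⁅commutator G, commutator G⁆ ≤ f.ker := by
  have hf {g : G} (hg : g ∈ commutator G) : f g ∈ commutator M := by
    have := mem_map_of_mem f hg
    rw [map_commutator_eq] at this
    exact commutator_mono le_top le_top this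
  refine commutator_le.mpr fun g₁ h₁ g₂ h₂ => ?_
  rw [MonoidHom.mem_ker, map_commutatorElement, commutatorElement_eq_one_iff_mul_comm]
  exact setLike_mul_comm (hf h₁) (hf h₂)

end DerivedSubgroup

section SemidirectProduct

variable {N A G : Type*} [CommGroup A] [Group G]

def SemidirectProduct.commutatorLeftHom [Group N] {φ : A →* MulAut N} (f : G →* N ⋊[φ] A) :
    commutator G →* N where
  toFun x := (f x).left
  map_one' := by simp
  map_mul' x y := by
    have hx : (f x).right = 1 :=
      Abelianization.commutator_subset_ker (SemidirectProduct.rightHom.comp f) x.2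
    simp [SemidirectProduct.mul_left, hx]

instance [CommGroup N] {φ : A →* MulAut N} : IsMulCommutative (commutator (N ⋊[φ] A)) := by
  refine ⟨⟨fun x y => Subtype.ext ?_⟩⟩
  have hinl (z : commutator (N ⋊[φ] A)) : (z : N ⋊[φ] A) ∈ SemidirectProduct.inl.range := by
    rw [SemidirectProduct.range_inl_eq_ker_rightHom]
    exact Abelianization.commutator_subset_ker _ z.2
  obtain ⟨n, hn⟩ := hinl x
  obtain ⟨m, hm⟩ := hinl y
  simp only [coe_mul, ← hn, ← hm, ← map_mul, mul_comm]

end SemidirectProduct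

section MulSqRelation

variable {G : Type*} [Group G] {a b : G}

lemma conj_mul_inv_of_mul_sq (h : a * b ^ 2 = b * a ^ 2) :
    a * (b * a⁻¹) * a⁻¹ = (b * a⁻¹)⁻¹ * (a⁻¹ * b) :=
  calc a * (b * a⁻¹) * a⁻¹ = a * b⁻¹ * a⁻¹ * (a * b ^ 2) * a⁻¹ ^ 2 := by group
    _ = a * b⁻¹ * a⁻¹ * (b * a ^ 2) * a⁻¹ ^ 2 := by rw [h]
    _ = (b * a⁻¹)⁻¹ * (a⁻¹ * b) := by group

lemma inv_conj_inv_mul_of_mul_sq (h : a * b ^ 2 = b * a ^ 2) :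
    a⁻¹ * (a⁻¹ * b) * a = a⁻¹ * b * (b * a⁻¹) :=
  calc a⁻¹ * (a⁻¹ * b) * a = a⁻¹ * a⁻¹ * (b * a ^ 2) * a⁻¹ := by group
    _ = a⁻¹ * a⁻¹ * (a * b ^ 2) * a⁻¹ := by rw [h]
    _ = a⁻¹ * b * (b * a⁻¹) := by simp only [sq]; group

lemma conj_mem_of_mul_sq (h : a * b ^ 2 = b * a ^ 2) {S : Subgroup G} (hu : a⁻¹ * b ∈ S)
    (hx : b * a⁻¹ ∈ S) {y : G} (hy : y = a⁻¹ * b ∨ y = b * a⁻¹) :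
    a * y * a⁻¹ ∈ S ∧ a⁻¹ * y * a ∈ S := by
  rcases hy with rfl | rfl
  · rw [inv_conj_inv_mul_of_mul_sq h, show a * (a⁻¹ * b) * a⁻¹ = b * a⁻¹ by group]
    exact ⟨hx, mul_mem hu hx⟩
  · rw [conj_mul_inv_of_mul_sq h, show a⁻¹ * (b * a⁻¹) * a = a⁻¹ * b by group]
    exact ⟨mul_mem (inv_mem hx) hu, hu⟩

lemma abelianization_of_eq_of_mul_sq (h : a * b ^ 2 = b * a ^ 2) :
    Abelianization.of a = Abelianization.of b := by
  have h' := congrArg Abelianization.of h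
  rw [map_mul, map_mul, map_pow, map_pow, sq, sq, ← mul_assoc, ← mul_assoc,
    mul_comm (Abelianization.of b)] at h'
  exact (mul_left_cancel h').symm

lemma inv_mul_mem_commutator_of_mul_sq (h : a * b ^ 2 = b * a ^ 2) :
    a⁻¹ * b ∈ commutator G := by
  rw [← Abelianization.ker_of, MonoidHom.mem_ker, map_mul, map_inv, inv_mul_eq_one,
    abelianization_of_eq_of_mul_sq h]

lemma mul_inv_mem_commutator_of_mul_sq (h : a * b ^ 2 = b * a ^ 2) :
    b * a⁻¹ ∈ commutator G := by
  rw [← Abelianization.ker_of, MonoidHom.mem_ker, map_mul, map_inv, mul_inv_eq_one,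
    abelianization_of_eq_of_mul_sq h]

lemma mul_inv_pow_four_of_mul_sq (ha : a ^ 6 = 1) (hb : b ^ 6 = 1)
    (h : a * b ^ 2 = b * a ^ 2) (hc : Commute (a⁻¹ * b) (b * a⁻¹)) : (b * a⁻¹) ^ 4 = 1 := by
  set u := a⁻¹ * b
  set x := b * a⁻¹
  set σ := MulAut.conj a
  have hσu : σ u = x := by simp only [σ, u, x, MulAut.conj_apply]; group
  have hσx : σ x = x⁻¹ * u := conj_mul_inv_of_mul_sq h
  -- `aᵏ u a⁻ᵏ = σᵏ⁻¹ x` for `1 ≤ k ≤ 5`, and `a⁶ u a⁻⁶ = u`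
  have htel : b ^ 6 = x * σ x * σ (σ x) * σ (σ (σ x)) * σ (σ (σ (σ x))) *
      (a ^ 6 * u * (a ^ 6)⁻¹) * a ^ 6 := by
    simp only [σ, x, u, MulAut.conj_apply, pow_succ, pow_zero, one_mul]; group
  simp only [hσx, map_mul, map_inv, hσu, ha, hb, one_mul, inv_one, mul_one] at htel
  simp only [mul_inv_rev, inv_inv, mul_assoc, inv_mul_cancel_left, mul_inv_cancel_left] at htel
  have hx2 : u⁻¹ * (x * (x * u)) = x * x := by
    rw [← mul_assoc x x u, ← (hc.mul_right hc).eq, inv_mul_cancel_left]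
  calc x ^ 4 = x * (x * (u⁻¹ * (x * (x * u)))) := by
        rw [hx2]; simp only [pow_succ, pow_zero, one_mul, mul_assoc]
    _ = 1 := htel.symm

lemma inv_mul_pow_four_of_mul_sq (ha : a ^ 6 = 1) (hb : b ^ 6 = 1)
    (h : a * b ^ 2 = b * a ^ 2) (hc : Commute (a⁻¹ * b) (b * a⁻¹)) : (a⁻¹ * b) ^ 4 = 1 := by
  have hconj : a⁻¹ * b = MulAut.conj a⁻¹ (b * a⁻¹) := by
    rw [MulAut.conj_apply]; group
  rw [hconj, ← map_pow, mul_inv_pow_four_of_mul_sq ha hb h hc, map_one]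

end MulSqRelation

section Generation

variable {G : Type*} [Group G]

lemma closure_preimage_coe_eq_top {H : Subgroup G} {s : Set G} (h : H = closure s) :
    closure (((↑) : H → G) ⁻¹' s) = ⊤ := by
  subst h
  exact closure_closure_coe_preimage

lemma mem_normalizer_closure_of_conj_mem {s : Set G} {g : G}
    (h₁ : ∀ x ∈ s, g * x * g⁻¹ ∈ closure s) (h₂ : ∀ x ∈ s, g⁻¹ * x * g ∈ closure s) :
    g ∈ normalizer (closure s : Set G) := by
  have hconj (k : G) (hk : ∀ x ∈ s, k * x * k⁻¹ ∈ closure s) {y : G} (hy : y ∈ closure s) :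
      k * y * k⁻¹ ∈ closure s :=
    (closure_le (closure s |>.comap (MulAut.conj k).toMonoidHom)).mpr hk hy
  refine mem_normalizer_iff.mpr fun y => ⟨hconj g h₁, fun hy => ?_⟩
  simpa [mul_assoc] using hconj g⁻¹ (by simpa using h₂) hy

lemma commutator_le_of_inv_mul_mem {s : Set G} (hs : closure s = ⊤) {N : Subgroup G} [N.Normal]
    {g : G} (h : ∀ x ∈ s, g⁻¹ * x ∈ N) : commutator G ≤ N := by
  have hgen (y : G ⧸ N) : y ∈ zpowers (g : G ⧸ N) := by
    obtain ⟨y, rfl⟩ := QuotientGroup.mk_surjective y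
    have : closure s ≤ (zpowers (g : G ⧸ N)).comap (QuotientGroup.mk' N) := by
      refine (closure_le _).mpr fun x hx => ?_
      have : (x : G ⧸ N) = g := ((QuotientGroup.eq).mpr (h x hx)).symm
      simp [this]
    exact this (hs ▸ mem_top y)
  have : IsCyclic (G ⧸ N) := ⟨⟨g, hgen⟩⟩
  exact Normal.quotient_commutative_iff_commutator_le.mp inferInstance

lemma commutator_eq_closure_of_mul_sq {a b c : G} (hgen : closure {a, b, c} = ⊤)
    (hab : a * b ^ 2 = b * a ^ 2) (hac : a * c ^ 2 = c * a ^ 2) :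
    commutator G = closure {a⁻¹ * b, b * a⁻¹, a⁻¹ * c, c * a⁻¹} := by
  set S := closure {a⁻¹ * b, b * a⁻¹, a⁻¹ * c, c * a⁻¹}
  have hmem {y : G} (hy : y ∈ ({a⁻¹ * b, b * a⁻¹, a⁻¹ * c, c * a⁻¹} : Set G)) : y ∈ S :=
    subset_closure hy
  have hconj (y : G) (hy : y ∈ ({a⁻¹ * b, b * a⁻¹, a⁻¹ * c, c * a⁻¹} : Set G)) :
      a * y * a⁻¹ ∈ S ∧ a⁻¹ * y * a ∈ S := by
    rcases hy with hy | hy | hy | hy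
    · exact conj_mem_of_mul_sq hab (hmem (by simp)) (hmem (by simp)) (.inl hy)
    · exact conj_mem_of_mul_sq hab (hmem (by simp)) (hmem (by simp)) (.inr hy)
    · exact conj_mem_of_mul_sq hac (hmem (by simp)) (hmem (by simp)) (.inl hy)
    · exact conj_mem_of_mul_sq hac (hmem (by simp)) (hmem (by simp)) (.inr hy)
  have ha : a ∈ normalizer (S : Set G) :=
    mem_normalizer_closure_of_conj_mem (fun y hy => (hconj y hy).1) (fun y hy => (hconj y hy).2)
  have : S.Normal := by
    refine normalizer_eq_top_iff.mp (eq_top_iff.mpr (hgen ▸ (closure_le _).mpr ?_))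
    rintro y (hy | hy | hy) <;> subst y
    · exact ha
    · simpa using mul_mem ha (le_normalizer (hmem (by simp) : a⁻¹ * b ∈ S))
    · simpa using mul_mem ha (le_normalizer (hmem (by simp) : a⁻¹ * c ∈ S))
  refine le_antisymm (commutator_le_of_inv_mul_mem hgen (g := a) ?_) ((closure_le _).mpr ?_)
  · rintro _ (rfl | rfl | rfl)
    · simp
    · exact hmem (by simp)
    · exact hmem (by simp)
  · rintro _ (rfl | rfl | rfl | rfl)
    · exact inv_mul_mem_commutator_of_mul_sq hab
    · exact mul_inv_mem_commutator_of_mul_sq hab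
    · exact inv_mul_mem_commutator_of_mul_sq hac
    · exact mul_inv_mem_commutator_of_mul_sq hac

end Generation

section ZModHom

variable {M : Type*} [Monoid M] (n : ℕ) [NeZero n]

def zmodPowHom (g : M) (hg : g ^ n = 1) : Multiplicative (ZMod n) →* M where
  toFun z := g ^ z.toAdd.val
  map_one' := by simp
  map_mul' z w := by rw [toAdd_mul, ZMod.val_add, ← pow_eq_pow_mod _ hg, pow_add]

lemma zmodPowHom_ofAdd_one (g : M) (hg : g ^ n = 1) :
    zmodPowHom n g hg (.ofAdd 1) = g := by
  simp only [zmodPowHom, MonoidHom.coe_mk, OneHom.coe_mk, toAdd_ofAdd]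
  rw [ZMod.val_one_eq_one_mod, ← pow_eq_pow_mod _ hg, pow_one]

variable {n} in
lemma MonoidHom.ext_multiplicative_zmod {f g : Multiplicative (ZMod n) →* M}
    (h : f (.ofAdd 1) = g (.ofAdd 1)) : f = g := by
  refine MonoidHom.ext fun z => ?_
  have hz : z = .ofAdd 1 ^ z.toAdd.val := by
    rw [← ofAdd_nsmul, nsmul_one, ZMod.natCast_zmod_val, ofAdd_toAdd]
  rw [hz, map_pow, map_pow, h]

end ZModHom

section PiZModHom

variable {ι M : Type*} [Fintype ι] [DecidableEq ι] [CommGroup M] (n : ℕ) [NeZero n]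

def piZModHom (g : ι → M) (hg : ∀ i, g i ^ n = 1) : (ι → Multiplicative (ZMod n)) →* M :=
  (Pi.monoidHomMulEquiv _ M).symm fun i => zmodPowHom n (g i) (hg i)

lemma piZModHom_mulSingle (g : ι → M) (hg : ∀ i, g i ^ n = 1) (i : ι) :
    piZModHom n g hg (Pi.mulSingle i (.ofAdd 1)) = g i := by
  have h := congrFun ((Pi.monoidHomMulEquiv _ M).apply_symm_apply
    fun i => zmodPowHom n (g i) (hg i)) i
  rw [← zmodPowHom_ofAdd_one n (g i) (hg i), ← h]
  rfl

end PiZModHom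

namespace G3

open scoped IsMulCommutative

local notation "K" => G3 ⧸ ⁅commutator G3, commutator G3⁆

def gen (i : Fin 3) : K := (PresentedGroup.of i : G3)

lemma lift_gen_eq_one {r : FreeGroup (Fin 3)} (hr : r ∈ G3rels) : FreeGroup.lift gen r = 1 := by
  have : FreeGroup.lift gen = (QuotientGroup.mk' _).comp (PresentedGroup.mk G3rels) :=
    FreeGroup.ext_hom _ _ fun _ => rfl
  rw [this, MonoidHom.comp_apply, PresentedGroup.one_of_mem hr, map_one]

lemma gen_pow_six (i : Fin 3) : gen i ^ 6 = 1 := by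
  have h := lift_gen_eq_one (r := FreeGroup.of i ^ 6) (by fin_cases i <;> simp [G3rels])
  rwa [map_pow, FreeGroup.lift_apply_of] at h

lemma gen_zero_mul_sq {i : Fin 3} (hi : i ≠ 0) : gen 0 * gen i ^ 2 = gen i * gen 0 ^ 2 := by
  have h := lift_gen_eq_one
    (r := FreeGroup.of 0 * FreeGroup.of i ^ 2 * (FreeGroup.of i * FreeGroup.of 0 ^ 2)⁻¹)
    (by fin_cases i <;> simp_all [G3rels])
  simpa only [map_mul, map_inv, map_pow, FreeGroup.lift_apply_of, mul_inv_eq_one] using h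

lemma closure_gen : closure {gen 0, gen 1, gen 2} = ⊤ := by
  have h : ({gen 0, gen 1, gen 2} : Set K) =
      QuotientGroup.mk' _ '' Set.range PresentedGroup.of := by
    rw [← Set.range_comp]
    ext
    simp [Fin.exists_fin_succ, eq_comm, gen]
  rw [h, ← MonoidHom.map_closure, PresentedGroup.closure_range_of, ← MonoidHom.range_eq_map,
    QuotientGroup.range_mk']

lemma commutator_eq_closure_gen : commutator K =
    closure {(gen 0)⁻¹ * gen 1, gen 1 * (gen 0)⁻¹, (gen 0)⁻¹ * gen 2, gen 2 * (gen 0)⁻¹} :=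
  commutator_eq_closure_of_mul_sq closure_gen (gen_zero_mul_sq (by decide))
    (gen_zero_mul_sq (by decide))

def commGen : Fin 4 → commutator K :=
  ![⟨(gen 0)⁻¹ * gen 1, inv_mul_mem_commutator_of_mul_sq (gen_zero_mul_sq (by decide))⟩,
    ⟨gen 1 * (gen 0)⁻¹, mul_inv_mem_commutator_of_mul_sq (gen_zero_mul_sq (by decide))⟩,
    ⟨(gen 0)⁻¹ * gen 2, inv_mul_mem_commutator_of_mul_sq (gen_zero_mul_sq (by decide))⟩,
    ⟨gen 2 * (gen 0)⁻¹, mul_inv_mem_commutator_of_mul_sq (gen_zero_mul_sq (by decide))⟩]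

lemma commGen_pow_four (i : Fin 4) : commGen i ^ 4 = 1 := by
  have h4 {j : Fin 3} (hj : j ≠ 0) :
      ((gen 0)⁻¹ * gen j) ^ 4 = 1 ∧ (gen j * (gen 0)⁻¹) ^ 4 = 1 := by
    have hc : Commute ((gen 0)⁻¹ * gen j) (gen j * (gen 0)⁻¹) :=
      setLike_mul_comm (s := commutator K) (inv_mul_mem_commutator_of_mul_sq (gen_zero_mul_sq hj))
        (mul_inv_mem_commutator_of_mul_sq (gen_zero_mul_sq hj))
    exact ⟨inv_mul_pow_four_of_mul_sq (gen_pow_six 0) (gen_pow_six j) (gen_zero_mul_sq hj) hc,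
      mul_inv_pow_four_of_mul_sq (gen_pow_six 0) (gen_pow_six j) (gen_zero_mul_sq hj) hc⟩
  fin_cases i <;> apply Subtype.ext
  exacts [(h4 (by decide : (1 : Fin 3) ≠ 0)).1, (h4 (by decide : (1 : Fin 3) ≠ 0)).2,
    (h4 (by decide : (2 : Fin 3) ≠ 0)).1, (h4 (by decide : (2 : Fin 3) ≠ 0)).2]

/-- Conjugation by `a` on `G' ⧸ G''` in the coordinates `a⁻¹b, ba⁻¹, a⁻¹c, ca⁻¹`, as given by
`conj_mul_inv_of_mul_sq`. -/
def conjAut : MulAut (Fin 4 → Multiplicative (ZMod 4)) where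
  toFun f := ![f 1, f 0 / f 1, f 3, f 2 / f 3]
  invFun f := ![f 0 * f 1, f 0, f 2 * f 3, f 2]
  left_inv f := by ext i; fin_cases i <;> simp
  right_inv f := by ext i; fin_cases i <;> simp
  map_mul' f g := by ext i; fin_cases i <;> simp [mul_div_mul_comm]

set_option maxRecDepth 10000 in
lemma conjAut_pow_six : conjAut ^ 6 = 1 := by
  have h : ∀ f, conjAut (conjAut (conjAut (conjAut (conjAut (conjAut f))))) = f := by decide
  ext f : 1
  simpa [pow_succ, MulAut.mul_apply] using h f

abbrev Model :=
  (Fin 4 → Multiplicative (ZMod 4)) ⋊[zmodPowHom 6 conjAut conjAut_pow_six] Multiplicative (ZMod 6)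

def modelGen : Fin 3 → Model :=
  ![⟨1, .ofAdd 1⟩, ⟨Pi.mulSingle 1 (.ofAdd 1), .ofAdd 1⟩, ⟨Pi.mulSingle 3 (.ofAdd 1), .ofAdd 1⟩]

lemma modelGen_rels : ∀ r ∈ G3rels, FreeGroup.lift modelGen r = 1 := by
  simp only [G3rels, Set.mem_insert_iff, Set.mem_singleton_iff, forall_eq_or_imp, forall_eq,
    map_mul, map_pow, map_inv, FreeGroup.lift_apply_of]
  refine ⟨?_, ?_, ?_, ?_, ?_, ?_⟩ <;> apply SemidirectProduct.ext <;> decide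

noncomputable def toModel : K →* Model :=
  QuotientGroup.lift _ (PresentedGroup.toGroup modelGen_rels) (commutator_commutator_le_ker _)

lemma toModel_gen (i : Fin 3) : toModel (gen i) = modelGen i :=
  PresentedGroup.toGroup.of modelGen_rels

noncomputable def toCoords : commutator K →* (Fin 4 → Multiplicative (ZMod 4)) :=
  SemidirectProduct.commutatorLeftHom toModel

noncomputable def ofCoords : (Fin 4 → Multiplicative (ZMod 4)) →* commutator K :=
  piZModHom 4 commGen commGen_pow_four

lemma toCoords_apply (x : commutator K) : toCoords x = (toModel x).left := rfl

lemma toCoords_commGen (i : Fin 4) : toCoords (commGen i) = Pi.mulSingle i (.ofAdd 1) := by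
  fin_cases i <;>
  · simp only [toCoords_apply, commGen, Fin.mk_one, Fin.zero_eta, Fin.reduceFinMk,
      Matrix.cons_val, map_mul, map_inv, toModel_gen]
    decide

lemma toCoords_comp_ofCoords : toCoords.comp ofCoords = MonoidHom.id _ :=
  MonoidHom.functions_ext' _ _ _ fun i => MonoidHom.ext_multiplicative_zmod <| by
    simp [ofCoords, piZModHom_mulSingle, toCoords_commGen]

lemma ofCoords_comp_toCoords : ofCoords.comp toCoords = MonoidHom.id _ := by
  refine MonoidHom.eq_of_eqOn_dense (closure_preimage_coe_eq_top commutator_eq_closure_gen) ?_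
  intro x hx
  obtain ⟨i, rfl⟩ : ∃ i, commGen i = x := by
    rcases hx with hx | hx | hx | hx
    exacts [⟨0, Subtype.ext hx.symm⟩, ⟨1, Subtype.ext hx.symm⟩, ⟨2, Subtype.ext hx.symm⟩,
      ⟨3, Subtype.ext hx.symm⟩]
  rw [MonoidHom.comp_apply, toCoords_commGen, ofCoords, piZModHom_mulSingle]
  rfl

end G3

/-- G'\''/G'\'''\'' ≅ C₄⁴ for G(3): the abelianization of the derived subgroup of G(3)
is the direct product of four cyclic groups of order 4. -/
theorem derived_quotient_G3 :
    Nonempty (Abelianization (commutator G3) ≃* (Fin 4 → Multiplicative (ZMod 4))) :=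
  ⟨(abelianizationCommutatorEquiv G3).trans
    (G3.toCoords.toMulEquiv G3.ofCoords G3.ofCoords_comp_toCoords G3.toCoords_comp_ofCoords)⟩
end
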